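/- For every k ≥ 1, the number of 120-avoiding weak ascent sequences of length k equals the number of 201-avoiding weak ascent sequences of length k. Concretely, the map sending n₁…n_k to m₁…m_k with m_j = max{n₁,…,n_k} + min{n₁,…,n_k} − n_{k+1−j} is a bijection between 120-avoiding weak ascent sequences and 201-avoiding weak ascent sequences of length k. -/

import Mathlib

open Filter Topology

/-- Number of ascents in a sequence (list) of naturals. -/
def asc (s : List ℕ) : ℕ :=
  ((s.zip s.tail).filter (fun p => p.1 < p.2)).length

/-- `s` is an ascent sequence: first entry `0`, and each later entry is at most
one more than the number of ascents of the preceding prefix. -/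
def IsAscentSeq (s : List ℕ) : Prop :=
  (0 < s.length → s.getD 0 0 = 0) ∧
  ∀ i, 0 < i → i < s.length → s.getD i 0 ≤ asc (s.take i) + 1

/-- `s` is a weak ascent sequence: every entry is at most the number of ascents. -/
def IsWeakAscentSeq (s : List ℕ) : Prop :=
  ∀ x ∈ s, x ≤ asc s

/-- `s` contains the pattern `p`: some subsequence of `s` is order-isomorphic
(including equalities) to `p`. -/
def ContainsPattern (s p : List ℕ) : Prop :=
  ∃ idx : Fin p.length → ℕ, StrictMono idx ∧ (∀ a, idx a < s.length) ∧
    ∀ a b : Fin p.length, p.get a < p.get b ↔ s.getD (idx a) 0 < s.getD (idx b) 0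

def AvoidsPattern (s p : List ℕ) : Prop := ¬ ContainsPattern s p

/-- A pattern of length `j` is a permutation of `0,…,j-1`. -/
def IsPattern (p : List ℕ) : Prop := List.Perm p (List.range p.length)

/-- Sum-indecomposable: no proper prefix whose entries are all smaller than
all entries of the complementary suffix. -/
def SumIndecomposable (p : List ℕ) : Prop :=
  ¬ ∃ i, 0 < i ∧ i < p.length ∧ ∀ x ∈ p.take i, ∀ y ∈ p.drop i, x < y

/-- Number of `p`-avoiding ascent sequences of length `k`. -/
noncomputable def ascentAvoidCount (p : List ℕ) (k : ℕ) : ℕ :=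
  {s : List ℕ | s.length = k ∧ IsAscentSeq s ∧ AvoidsPattern s p}.ncard

/-- Number of `p`-avoiding weak ascent sequences of length `k`. -/
noncomputable def weakAvoidCount (p : List ℕ) (k : ℕ) : ℕ :=
  {s : List ℕ | s.length = k ∧ IsWeakAscentSeq s ∧ AvoidsPattern s p}.ncard

def listMax (s : List ℕ) : ℕ := s.foldr max 0
def listMin (s : List ℕ) : ℕ := s.foldr min (listMax s)

/-- Reverse-complement map: `m j = max + min - n (k+1-j)`. -/
def revComp (s : List ℕ) : List ℕ :=
  s.reverse.map (fun x => listMax s + listMin s - x)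

/-- Occurrence of pattern 000: three equal entries. -/
def Contains000 (s : List ℕ) : Prop :=
  ∃ a b c, a < b ∧ b < c ∧ c < s.length ∧
    s.getD a 0 = s.getD b 0 ∧ s.getD b 0 = s.getD c 0

/-- Occurrence of pattern 100: `n i₁ > n i₂ = n i₃`. -/
def Contains100 (s : List ℕ) : Prop :=
  ∃ a b c, a < b ∧ b < c ∧ c < s.length ∧
    s.getD b 0 < s.getD a 0 ∧ s.getD b 0 = s.getD c 0

/-- Occurrence of pattern 110: `n i₁ = n i₂ > n i₃`. -/
def Contains110 (s : List ℕ) : Prop :=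
  ∃ a b c, a < b ∧ b < c ∧ c < s.length ∧
    s.getD a 0 = s.getD b 0 ∧ s.getD c 0 < s.getD b 0

/-- Occurrence of pattern 120: `n i₂ > n i₁ > n i₃`. -/
def Contains120 (s : List ℕ) : Prop :=
  ∃ a b c, a < b ∧ b < c ∧ c < s.length ∧
    s.getD a 0 < s.getD b 0 ∧ s.getD c 0 < s.getD a 0

/-- Occurrence of pattern 201: `n i₁ > n i₃ > n i₂`. -/
def Contains201 (s : List ℕ) : Prop :=
  ∃ a b c, a < b ∧ b < c ∧ c < s.length ∧
    s.getD c 0 < s.getD a 0 ∧ s.getD b 0 < s.getD c 0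

/-- Occurrence of pattern 012: `n i₁ < n i₂ < n i₃`. -/
def Contains012 (s : List ℕ) : Prop :=
  ∃ a b c, a < b ∧ b < c ∧ c < s.length ∧
    s.getD a 0 < s.getD b 0 ∧ s.getD b 0 < s.getD c 0

/-- Occurrence of pattern 011: `n i₁ < n i₂ = n i₃`. -/
def Contains011 (s : List ℕ) : Prop :=
  ∃ a b c, a < b ∧ b < c ∧ c < s.length ∧
    s.getD a 0 < s.getD b 0 ∧ s.getD b 0 = s.getD c 0

/-- Occurrence of pattern 021: `n i₁ < n i₃ < n i₂`. -/
def Contains021 (s : List ℕ) : Prop :=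
  ∃ a b c, a < b ∧ b < c ∧ c < s.length ∧
    s.getD a 0 < s.getD c 0 ∧ s.getD c 0 < s.getD b 0

/-- Occurrence of pattern 102: `n i₂ < n i₁ < n i₃`. -/
def Contains102 (s : List ℕ) : Prop :=
  ∃ a b c, a < b ∧ b < c ∧ c < s.length ∧
    s.getD b 0 < s.getD a 0 ∧ s.getD a 0 < s.getD c 0

/-- The construction `C = 0101⋯01 W̃₁⋯W̃ₖ` from weak ascent sequences. -/
def buildC (k : ℕ) (W : Fin k → List ℕ) : List ℕ :=
  (List.replicate k ([0,1] : List ℕ)).flatten ++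
    (List.ofFn (fun h : Fin k =>
      (W h).map (fun x =>
        x + 1 + ∑ j ∈ Finset.univ.filter (fun j => j < h), listMax (W j)))).flatten

/-!
Reverse-complement keeps the maximum and the minimum of a sequence, so it is an involution.
Reversal turns ascents into descents and complementation turns them back, so the number of
ascents is preserved; since the maximum is preserved too, so is being a weak ascent sequence.
An occurrence of `120` at positions `i₁ < i₂ < i₃` becomes an occurrence of `201` at the
mirrored positions, and conversely.
-/

theorem asc_cons_cons (a b : ℕ) (l : List ℕ) :
    asc (a :: b :: l) = (if a < b then 1 else 0) + asc (b :: l) := by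
  by_cases h : a < b <;> simp [asc, h, Nat.add_comm]

theorem asc_singleton (a : ℕ) : asc [a] = 0 := rfl

theorem asc_append_pair : ∀ (l : List ℕ) (y x : ℕ),
    asc (l ++ [y, x]) = asc (l ++ [y]) + if y < x then 1 else 0
  | [], y, x => by simp [asc_cons_cons, asc_singleton]
  | [a], y, x => by simp [asc_cons_cons, asc_singleton]
  | a :: b :: l, y, x => by
    have ih := asc_append_pair (b :: l) y x
    simp only [List.cons_append, asc_cons_cons] at ih ⊢
    omega

theorem asc_reverse_map {g : ℕ → ℕ} : ∀ {l : List ℕ},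
    StrictAntiOn g {x | x ∈ l} → asc (l.reverse.map g) = asc l
  | [], _ => rfl
  | [_], _ => rfl
  | a :: b :: l, hg => by
    have ih := asc_reverse_map (l := b :: l) (hg.mono fun x hx => List.mem_cons_of_mem a hx)
    have hba : g b < g a ↔ a < b := StrictAntiOn.lt_iff_gt hg (by simp) (by simp)
    have hsplit : (a :: b :: l).reverse.map g = l.reverse.map g ++ [g b, g a] := by simp
    rw [hsplit, asc_append_pair, asc_cons_cons, ← ih]
    simp only [hba, List.reverse_cons, List.map_append, List.map_cons, List.map_nil]
    omega

theorem List.foldr_min_mem_cons {α : Type*} [LinearOrder α] (l : List α) (b : α) :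
    l.foldr min b ∈ b :: l := by
  induction l with
  | nil => simp
  | cons a l ih =>
    rw [List.foldr_cons]
    rcases min_choice a (l.foldr min b) with h | h <;> rw [h]
    · simp
    · exact List.mem_cons.mpr ((List.mem_cons.mp ih).imp_right (List.mem_cons_of_mem a))

section ListMaxMin

variable {s : List ℕ} {x B : ℕ}

theorem le_listMax (hx : x ∈ s) : x ≤ listMax s := List.le_max_of_le' 0 hx le_rfl

theorem listMax_le (h : ∀ x ∈ s, x ≤ B) : listMax s ≤ B := List.max_le_of_forall_le s B h

theorem listMax_mem (hs : s ≠ []) : listMax s ∈ s :=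
  List.maximum_mem (List.foldr_max_of_ne_nil hs).symm

theorem listMin_le (hx : x ∈ s) : listMin s ≤ x := List.min_le_of_le' _ hx le_rfl

theorem le_listMin (hB : B ≤ listMax s) (h : ∀ x ∈ s, B ≤ x) : B ≤ listMin s := by
  unfold listMin
  generalize listMax s = b at hB
  induction s with
  | nil => exact hB
  | cons a l ih => exact le_min (h a (by simp)) (ih fun x hx => h x (by simp [hx]))

theorem listMin_mem (hs : s ≠ []) : listMin s ∈ s := by
  rcases List.mem_cons.mp (List.foldr_min_mem_cons s (listMax s)) with h | h
  · rw [listMin, h]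
    exact listMax_mem hs
  · exact h

theorem getD_le_listMax {i : ℕ} (hi : i < s.length) : s.getD i 0 ≤ listMax s := by
  rw [List.getD_eq_getElem _ _ hi]
  exact le_listMax (List.getElem_mem hi)

end ListMaxMin

section RevComp

variable {s : List ℕ}

theorem length_revComp (s : List ℕ) : (revComp s).length = s.length := by simp [revComp]

theorem mem_revComp {y : ℕ} : y ∈ revComp s ↔ ∃ x ∈ s, listMax s + listMin s - x = y := by
  simp [revComp]

theorem listMax_revComp (hs : s ≠ []) : listMax (revComp s) = listMax s := by
  refine le_antisymm (listMax_le fun y hy => ?_) (le_listMax (mem_revComp.mpr ?_))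
  · obtain ⟨x, hx, rfl⟩ := mem_revComp.mp hy
    have := listMin_le hx
    omega
  · exact ⟨listMin s, listMin_mem hs, by omega⟩

theorem listMin_revComp (hs : s ≠ []) : listMin (revComp s) = listMin s := by
  refine le_antisymm (listMin_le (mem_revComp.mpr ?_)) (le_listMin ?_ fun y hy => ?_)
  · exact ⟨listMax s, listMax_mem hs, by omega⟩
  · rw [listMax_revComp hs]
    exact listMin_le (listMax_mem hs)
  · obtain ⟨x, hx, rfl⟩ := mem_revComp.mp hy
    have := le_listMax hx
    omega

theorem revComp_involutive : Function.Involutive revComp := by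
  intro s
  rcases eq_or_ne s [] with rfl | hs
  · rfl
  · rw [revComp, listMax_revComp hs, listMin_revComp hs, revComp]
    simp only [List.map_reverse, List.reverse_reverse, List.map_map]
    conv_rhs => rw [← List.map_id s]
    refine List.map_congr_left fun x hx => ?_
    have := le_listMax hx
    simp only [Function.comp_apply, id]
    omega

theorem asc_revComp (s : List ℕ) : asc (revComp s) = asc s :=
  asc_reverse_map fun x _ y hy hxy => by
    have := le_listMax (s := s) hy
    omega

theorem IsWeakAscentSeq.revComp (h : IsWeakAscentSeq s) : IsWeakAscentSeq (revComp s) := by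
  intro y hy
  obtain ⟨x, hx, rfl⟩ := mem_revComp.mp hy
  have := listMax_le h
  have := listMin_le hx
  rw [asc_revComp]
  omega

theorem getD_revComp_mirror {i : ℕ} (hi : i < s.length) :
    (revComp s).getD (s.length - 1 - i) 0 = listMax s + listMin s - s.getD i 0 := by
  rw [List.getD_eq_getElem _ _ (by rw [length_revComp]; omega), List.getD_eq_getElem _ _ hi]
  simp only [revComp, List.getElem_map, List.getElem_reverse]
  congr 3
  omega

theorem getD_revComp_mirror_lt_iff {i j : ℕ} (hi : i < s.length) (hj : j < s.length) :
    (revComp s).getD (s.length - 1 - i) 0 < (revComp s).getD (s.length - 1 - j) 0 ↔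
      s.getD j 0 < s.getD i 0 := by
  rw [getD_revComp_mirror hi, getD_revComp_mirror hj]
  have := getD_le_listMax hi
  have := getD_le_listMax hj
  omega

theorem Contains120.revComp (h : Contains120 s) : Contains201 (revComp s) := by
  obtain ⟨a, b, c, hab, hbc, hc, hab', hca⟩ := h
  exact ⟨s.length - 1 - c, s.length - 1 - b, s.length - 1 - a, by omega, by omega,
    by rw [length_revComp]; omega, (getD_revComp_mirror_lt_iff (by omega) hc).mpr hca,
    (getD_revComp_mirror_lt_iff (by omega) (by omega)).mpr hab'⟩

theorem Contains201.revComp (h : Contains201 s) : Contains120 (revComp s) := by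
  obtain ⟨a, b, c, hab, hbc, hc, hca, hbc'⟩ := h
  exact ⟨s.length - 1 - c, s.length - 1 - b, s.length - 1 - a, by omega, by omega,
    by rw [length_revComp]; omega, (getD_revComp_mirror_lt_iff hc (by omega)).mpr hbc',
    (getD_revComp_mirror_lt_iff (by omega) hc).mpr hca⟩

theorem contains201_revComp_iff : Contains201 (revComp s) ↔ Contains120 s :=
  ⟨fun h => revComp_involutive s ▸ h.revComp, Contains120.revComp⟩

theorem contains120_revComp_iff : Contains120 (revComp s) ↔ Contains201 s :=
  ⟨fun h => revComp_involutive s ▸ h.revComp, Contains201.revComp⟩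

end RevComp

theorem stmt4_general (k : ℕ) :
    {s : List ℕ | s.length = k ∧ IsWeakAscentSeq s ∧ ¬ Contains120 s}.ncard =
      {s : List ℕ | s.length = k ∧ IsWeakAscentSeq s ∧ ¬ Contains201 s}.ncard ∧
    Set.BijOn revComp
      {s : List ℕ | s.length = k ∧ IsWeakAscentSeq s ∧ ¬ Contains120 s}
      {s : List ℕ | s.length = k ∧ IsWeakAscentSeq s ∧ ¬ Contains201 s} := by
  have revComp_mapsTo {P Q : List ℕ → Prop} (hQP : ∀ s, Q (revComp s) ↔ P s) :
      Set.MapsTo revComp {s | s.length = k ∧ IsWeakAscentSeq s ∧ ¬ P s}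
        {s | s.length = k ∧ IsWeakAscentSeq s ∧ ¬ Q s} :=
    fun s ⟨hlen, hweak, hP⟩ =>
      ⟨(length_revComp s).trans hlen, hweak.revComp, (hQP s).not.mpr hP⟩
  have hbij : Set.BijOn revComp
      {s : List ℕ | s.length = k ∧ IsWeakAscentSeq s ∧ ¬ Contains120 s}
      {s : List ℕ | s.length = k ∧ IsWeakAscentSeq s ∧ ¬ Contains201 s} :=
    Set.InvOn.bijOn ⟨fun s _ => revComp_involutive s, fun s _ => revComp_involutive s⟩
      (revComp_mapsTo fun _ => contains201_revComp_iff)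
      (revComp_mapsTo fun _ => contains120_revComp_iff)
  exact ⟨hbij.ncard_eq, hbij⟩

/-- 120-avoiding and 201-avoiding weak ascent sequences are equinumerous, via
the reverse-complement bijection. -/
theorem stmt4 (k : ℕ) (hk : 1 ≤ k) :
    {s : List ℕ | s.length = k ∧ IsWeakAscentSeq s ∧ ¬ Contains120 s}.ncard =
      {s : List ℕ | s.length = k ∧ IsWeakAscentSeq s ∧ ¬ Contains201 s}.ncard ∧
    Set.BijOn revComp
      {s : List ℕ | s.length = k ∧ IsWeakAscentSeq s ∧ ¬ Contains120 s}
      {s : List ℕ | s.length = k ∧ IsWeakAscentSeq s ∧ ¬ Contains201 s} :=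
  stmt4_general k
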